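/- The assignment j*x ↦ x ⊕ Φ⁻¹x on objects, sending the morphism (f, f') : j*x → j*y to the matrix [[f, f'], [0, Φ⁻¹f]] : x ⊕ Φ⁻¹x → y ⊕ Φ⁻¹y, defines a functor j_* : 𝒟_Φ → 𝒟. -/

import Mathlib

open CategoryTheory CategoryTheory.Limits

universe v u

/-- The category `𝒟_Φ`: same objects as `𝒟`; we write `j*x` for the object
corresponding to `x : 𝒟`. -/
structure DPhi (D : Type u) [Category.{v} D] [Preadditive D] (Φinv : D ⥤ D) where
  /-- the underlying object of `𝒟` -/
  base : D

variable {D : Type u} [Category.{v} D] [Preadditive D] [HasBinaryBiproducts D]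
  (Φinv : D ⥤ D) [Φinv.Additive]

/-- `𝒟_Φ` as a category: `Hom(j*x, j*y) = Hom(x, y) × Hom(x, Φ⁻¹ y)`, with
composition `(f, f') ∘ (g, g') = (f ∘ g, f' ∘ g + Φ⁻¹(f) ∘ g')`. -/
instance DPhi.category : Category (DPhi D Φinv) where
  Hom x y := (x.base ⟶ y.base) × (x.base ⟶ Φinv.obj y.base)
  id x := (𝟙 x.base, 0)
  comp p q := (p.1 ≫ q.1, p.1 ≫ q.2 + p.2 ≫ Φinv.map q.1)
  id_comp p := by dsimp; simp
  comp_id p := by dsimp; simp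
  assoc p q r := by
    dsimp
    refine Prod.ext (by simp) ?_
    simp [Preadditive.add_comp, Preadditive.comp_add, add_assoc]

/-- The proposed object assignment of `j_* : 𝒟_Φ → 𝒟`, namely `j*x ↦ x ⊕ Φ⁻¹x`. -/
noncomputable def jLowerObj (x : DPhi D Φinv) : D := x.base ⊞ Φinv.obj x.base

/-- The proposed morphism assignment of `j_*`: the pair `(f, f') : j*x ⟶ j*y` is
sent to the upper-triangular matrix `[[f, f'], [0, Φ⁻¹f]] : x ⊕ Φ⁻¹x ⟶ y ⊕ Φ⁻¹y`. -/
noncomputable def jLowerMap {x y : DPhi D Φinv} (p : x ⟶ y) : jLowerObj Φinv x ⟶ jLowerObj Φinv y :=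
  biprod.desc (biprod.lift p.1 p.2) (biprod.lift 0 (Φinv.map p.1))

theorem CategoryTheory.Limits.biprod.desc_lift_lift_eq_ofComponents {C : Type*} [Category C]
    [Preadditive C] [HasBinaryBiproducts C] {X₁ X₂ Y₁ Y₂ : C} (f₁₁ : X₁ ⟶ Y₁) (f₁₂ : X₁ ⟶ Y₂)
    (f₂₁ : X₂ ⟶ Y₁) (f₂₂ : X₂ ⟶ Y₂) :
    biprod.desc (biprod.lift f₁₁ f₁₂) (biprod.lift f₂₁ f₂₂) =
      Biprod.ofComponents f₁₁ f₁₂ f₂₁ f₂₂ := by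
  ext <;> simp

theorem CategoryTheory.Limits.Biprod.ofComponents_id {C : Type*} [Category C] [Preadditive C]
    [HasBinaryBiproducts C] (X₁ X₂ : C) :
    Biprod.ofComponents (𝟙 X₁) 0 0 (𝟙 X₂) = 𝟙 (X₁ ⊞ X₂) := by
  ext <;> simp

section DPhi

variable {C : Type*} [Category C] [Preadditive C] {F : C ⥤ C}

theorem DPhi.id_fst (x : DPhi C F) : (𝟙 x : x ⟶ x).1 = 𝟙 x.base := rfl

theorem DPhi.id_snd (x : DPhi C F) : (𝟙 x : x ⟶ x).2 = 0 := rfl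

theorem DPhi.comp_fst {x y z : DPhi C F} (p : x ⟶ y) (q : y ⟶ z) : (p ≫ q).1 = p.1 ≫ q.1 := rfl

theorem DPhi.comp_snd {x y z : DPhi C F} (p : x ⟶ y) (q : y ⟶ z) :
    (p ≫ q).2 = p.1 ≫ q.2 + p.2 ≫ F.map q.1 := rfl

theorem jLowerMap_eq_ofComponents [HasBinaryBiproducts C] {x y : DPhi C F} (p : x ⟶ y) :
    jLowerMap F p = Biprod.ofComponents p.1 p.2 0 (F.map p.1) :=
  biprod.desc_lift_lift_eq_ofComponents _ _ _ _

end DPhi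

/-- the assignment `j*x ↦ x ⊕ Φ⁻¹x`,
`(f, f') ↦ [[f, f'], [0, Φ⁻¹f]]` defines a functor `j_* : 𝒟_Φ ⥤ 𝒟`; that is, it
preserves identities and composition. -/
theorem jLower_is_functor :
    (∀ x : DPhi D Φinv, jLowerMap Φinv (𝟙 x) = 𝟙 (jLowerObj Φinv x)) ∧
      ∀ {x y z : DPhi D Φinv} (p : x ⟶ y) (q : y ⟶ z),
        jLowerMap Φinv (p ≫ q) = jLowerMap Φinv p ≫ jLowerMap Φinv q := by
  refine ⟨fun x => ?_, fun p q => ?_⟩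
  · rw [jLowerMap_eq_ofComponents, DPhi.id_fst, DPhi.id_snd, Φinv.map_id]
    exact Biprod.ofComponents_id _ _
  · -- `Biprod.ofComponents_comp` only matches once the objects are visibly biproducts
    unfold jLowerObj
    rw [jLowerMap_eq_ofComponents, jLowerMap_eq_ofComponents, jLowerMap_eq_ofComponents,
      Biprod.ofComponents_comp, DPhi.comp_fst, DPhi.comp_snd, Φinv.map_comp]
    simp only [comp_zero, zero_comp, add_zero, zero_add]
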